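/- Assume there exists a metric r ∈ Ω with constant α-curvature (K_i(r) = s_α(r)·r_i^α for all i). Then: if χ(M) > 0, the set Y contains a point with all coordinates positive (Y ∩ ℝ^N_{>0} ≠ ∅); if χ(M) < 0, Y contains a point with all coordinates negative (Y ∩ ℝ^N_{<0} ≠ ∅); and if χ(M) = 0, the zero vector belongs to Y. -/

import Mathlib

open Real Filter Topology

namespace IDCP

variable {N : ℕ}

/-- The set of edges: 2-element subsets of vertices contained in some face. -/
def edges (Fc : Finset (Finset (Fin N))) : Finset (Finset (Fin N)) :=
  Fc.biUnion fun f => f.powersetCard 2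

/-- `Fc` is the face set of a triangulation of a closed connected surface:
every face has 3 vertices, every edge lies in exactly two faces, and the
1-skeleton is connected. -/
structure IsTriangulation (Fc : Finset (Finset (Fin N))) : Prop where
  card3 : ∀ f ∈ Fc, f.card = 3
  edge2 : ∀ e ∈ edges Fc, (Fc.filter fun f => e ⊆ f).card = 2
  conn : (SimpleGraph.fromRel fun i j => ({i, j} : Finset (Fin N)) ∈ edges Fc).Connected

/-- Euler characteristic χ(M) = N − |E| + |F|. -/
def chi (Fc : Finset (Finset (Fin N))) : ℤ :=
  (N : ℤ) - ((edges Fc).card : ℤ) + (Fc.card : ℤ)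

/-- Edge length l_ij = √(r_i² + r_j² + 2 r_i r_j I_{ij}). -/
noncomputable def len (I : Finset (Fin N) → ℝ) (r : Fin N → ℝ) (i j : Fin N) : ℝ :=
  Real.sqrt (r i ^ 2 + r j ^ 2 + 2 * r i * r j * I {i, j})

/-- The cosine of the inner angle at `i` in triangle `{i,j,k}`. -/
noncomputable def cosAng (I : Finset (Fin N) → ℝ) (r : Fin N → ℝ) (i j k : Fin N) : ℝ :=
  (len I r i j ^ 2 + len I r i k ^ 2 - len I r j k ^ 2) / (2 * len I r i j * len I r i k)

/-- The auxiliary function Λ. -/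
noncomputable def Lam (x : ℝ) : ℝ :=
  if x ≤ -1 then π else if x ≤ 1 then Real.arccos x else 0

/-- Discrete Gaussian curvature K_i = 2π − Σ_{{i,j,k}∈F} θ_i^{jk}.  Every face
containing `i` appears exactly twice (once for each ordering of `j,k`), whence
the factor 1/2. -/
noncomputable def K (Fc : Finset (Finset (Fin N))) (I : Finset (Fin N) → ℝ)
    (r : Fin N → ℝ) (i : Fin N) : ℝ :=
  2 * π - (1 / 2) * ∑ j, ∑ k,
    (if ({i, j, k} : Finset (Fin N)) ∈ Fc then Real.arccos (cosAng I r i j k) else 0)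

/-- Extended curvature K̃_i = 2π − Σ θ̃_i^{jk}, using the generalized angles Λ. -/
noncomputable def Kt (Fc : Finset (Finset (Fin N))) (I : Finset (Fin N) → ℝ)
    (r : Fin N → ℝ) (i : Fin N) : ℝ :=
  2 * π - (1 / 2) * ∑ j, ∑ k,
    (if ({i, j, k} : Finset (Fin N)) ∈ Fc then Lam (cosAng I r i j k) else 0)

/-- The set Ω of inversive distance circle packing metrics. -/
def Omega (Fc : Finset (Finset (Fin N))) (I : Finset (Fin N) → ℝ) : Set (Fin N → ℝ) :=
  {r | (∀ i, 0 < r i) ∧ ∀ i j k : Fin N, ({i, j, k} : Finset (Fin N)) ∈ Fc →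
    len I r j k < len I r i j + len I r i k}

/-- s_α = 2πχ(M)/‖r‖_α^α. -/
noncomputable def sA (Fc : Finset (Finset (Fin N))) (α : ℝ) (r : Fin N → ℝ) : ℝ :=
  2 * π * (chi Fc : ℝ) / ∑ j, r j ^ α

/-- Back from u-coordinates: r_i = e^{u_i}. -/
noncomputable def rOf (u : Fin N → ℝ) : Fin N → ℝ := fun i => Real.exp (u i)

/-- ln Ω, the image of Ω under the coordinate change r ↦ u, u_i = ln r_i. -/
def lnOmega (Fc : Finset (Finset (Fin N))) (I : Finset (Fin N) → ℝ) : Set (Fin N → ℝ) :=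
  {u | rOf u ∈ Omega Fc I}

/-- `u` solves the α-flow du_i/dt = s_α r_i^α − K_i on the time set `D`,
staying in ln Ω. -/
def IsFlowSol (Fc : Finset (Finset (Fin N))) (I : Finset (Fin N) → ℝ) (α : ℝ)
    (D : Set ℝ) (u : ℝ → Fin N → ℝ) : Prop :=
  ∀ t ∈ D, rOf (u t) ∈ Omega Fc I ∧
    ∀ i, HasDerivWithinAt (fun s => u s i)
      (sA Fc α (rOf (u t)) * rOf (u t) i ^ α - K Fc I (rOf (u t)) i) D t

/-- `u` solves the extended α-flow du_i/dt = s_α r_i^α − K̃_i on the time set `D`. -/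
def IsExtFlowSol (Fc : Finset (Finset (Fin N))) (I : Finset (Fin N) → ℝ) (α : ℝ)
    (D : Set ℝ) (u : ℝ → Fin N → ℝ) : Prop :=
  ∀ t ∈ D, ∀ i, HasDerivWithinAt (fun s => u s i)
      (sA Fc α (rOf (u t)) * rOf (u t) i ^ α - Kt Fc I (rOf (u t)) i) D t

/-- Lk(A): pairs (e,v) with both endpoints of e outside A, v ∈ A, and e,v spanning a face. -/
def Lk (Fc : Finset (Finset (Fin N))) (A : Finset (Fin N)) :
    Finset (Finset (Fin N) × Fin N) :=
  ((edges Fc) ×ˢ (Finset.univ : Finset (Fin N))).filter fun p =>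
    (∀ x ∈ p.1, x ∉ A) ∧ p.2 ∈ A ∧ insert p.2 p.1 ∈ Fc

/-- Euler characteristic χ(F_A) of the subcomplex spanned by A. -/
def chiSub (Fc : Finset (Finset (Fin N))) (A : Finset (Fin N)) : ℤ :=
  (A.card : ℤ) - (((edges Fc).filter (fun e => e ⊆ A)).card : ℤ)
    + ((Fc.filter (fun f => f ⊆ A)).card : ℤ)

/-- The lower bound −Σ_{(e,v)∈Lk(A)}(π − Λ(I_e)) + 2πχ(F_A) defining Y_A. -/
noncomputable def Ybound (Fc : Finset (Finset (Fin N))) (I : Finset (Fin N) → ℝ)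
    (A : Finset (Fin N)) : ℝ :=
  -(∑ p ∈ Lk Fc A, (π - Lam (I p.1))) + 2 * π * (chiSub Fc A : ℝ)

/-- x ∈ Y. -/
noncomputable def memY (Fc : Finset (Finset (Fin N))) (I : Finset (Fin N) → ℝ)
    (x : Fin N → ℝ) : Prop :=
  (∑ i, x i) = 2 * π * (chi Fc : ℝ) ∧
    ∀ A : Finset (Fin N), A.Nonempty → A ≠ Finset.univ → Ybound Fc I A < ∑ i ∈ A, x i

/-- x ∈ Ȳ. -/
noncomputable def memYbar (Fc : Finset (Finset (Fin N))) (I : Finset (Fin N) → ℝ)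
    (x : Fin N → ℝ) : Prop :=
  (∑ i, x i) = 2 * π * (chi Fc : ℝ) ∧
    ∀ A : Finset (Fin N), A.Nonempty → A ≠ Finset.univ → Ybound Fc I A ≤ ∑ i ∈ A, x i


/-! ### Auxiliary lemmas -/

lemma arccos_lt_pi' {x : ℝ} (h : -1 < x) : Real.arccos x < π :=
  lt_of_le_of_ne (Real.arccos_le_pi x) fun he => by
    rw [Real.arccos_eq_pi] at he; linarith

lemma arccos_lt_of_lt {x y : ℝ} (hx : -1 ≤ x) (hxy : x < y) (hy : y ≤ 1) :
    Real.arccos y < Real.arccos x :=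
  Real.strictAntiOn_arccos ⟨hx, hxy.le.trans hy⟩ ⟨hx.trans hxy.le, hy⟩ hxy

lemma cos_bound {p q s : ℝ} (hq : 0 < q) (hs : 0 < s) (hp : 0 < p)
    (h1 : p < q + s) (h2 : q < p + s) (h3 : s < p + q) :
    -1 < (q^2+s^2-p^2)/(2*q*s) ∧ (q^2+s^2-p^2)/(2*q*s) < 1 := by
  constructor
  · rw [lt_div_iff₀ (by positivity)]; nlinarith
  · rw [div_lt_one (by positivity)]; nlinarith

lemma ang_sum {a b c : ℝ} (ha : 0 < a) (hb : 0 < b) (hc : 0 < c)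
    (t1 : a < b + c) (t2 : b < a + c) (t3 : c < a + b) :
    Real.arccos ((b^2+c^2-a^2)/(2*b*c)) + Real.arccos ((a^2+c^2-b^2)/(2*a*c))
      + Real.arccos ((a^2+b^2-c^2)/(2*a*b)) = π := by
  set x := (b^2+c^2-a^2)/(2*b*c) with hxdef
  set y := (a^2+c^2-b^2)/(2*a*c) with hydef
  set z := (a^2+b^2-c^2)/(2*a*b) with hzdef
  obtain ⟨hx1, hx2⟩ := cos_bound hb hc ha t1 t2 t3
  obtain ⟨hy1, hy2⟩ := cos_bound ha hc hb (by linarith) (by linarith) (by linarith)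
  obtain ⟨hz1, hz2⟩ := cos_bound ha hb hc (by linarith) (by linarith) (by linarith)
  have ha' := ha.ne'; have hb' := hb.ne'; have hc' := hc.ne'
  have hxyz : (1 - x^2)*(1 - y^2) = (x*y+z)^2 := by
    rw [hxdef, hydef, hzdef]; field_simp; ring
  have hpos : 0 < x*y + z := by
    have h : x*y + z = ((a^2-(b-c)^2)*((b+c)^2-a^2))/(4*a*b*c^2) := by
      rw [hxdef, hydef, hzdef]; field_simp; ring
    rw [h]
    apply div_pos (mul_pos (by nlinarith) (by nlinarith)) (by positivity)
  have hABlt : Real.arccos x + Real.arccos y < π := by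
    have hsum : 0 < x + y := by
      have h : x + y = ((a+b)*((c+a-b)*(c-a+b)))/(2*a*b*c) := by
        rw [hxdef, hydef]; field_simp; ring
      rw [h]
      apply div_pos (mul_pos (by linarith) (mul_pos (by linarith) (by linarith))) (by positivity)
    have := arccos_lt_of_lt (by linarith : (-1:ℝ) ≤ -y) (by linarith) hx2.le
    rw [Real.arccos_neg] at this; linarith
  have hcos : Real.cos (Real.arccos x + Real.arccos y) = -z := by
    rw [Real.cos_add, Real.cos_arccos hx1.le hx2.le, Real.cos_arccos hy1.le hy2.le,
      Real.sin_arccos, Real.sin_arccos, ← Real.sqrt_mul (by nlinarith : (0:ℝ) ≤ 1 - x^2),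
      hxyz, Real.sqrt_sq hpos.le]
    ring
  have h := Real.arccos_cos (add_nonneg (Real.arccos_nonneg x) (Real.arccos_nonneg y)) hABlt.le
  rw [hcos, Real.arccos_neg] at h
  linarith


lemma apex_lt {ri rj rk Iij Iik Ijk lij lik ljk : ℝ}
    (hri : 0 < ri) (hrj : 0 < rj) (hrk : 0 < rk)
    (hIij : 0 ≤ Iij) (hIik : 0 ≤ Iik) (hIjk : 0 ≤ Ijk)
    (e1 : lij^2 = ri^2+rj^2+2*ri*rj*Iij) (e2 : lik^2 = ri^2+rk^2+2*ri*rk*Iik)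
    (e3 : ljk^2 = rj^2+rk^2+2*rj*rk*Ijk)
    (hlij : 0 < lij) (hlik : 0 < lik) (hljk : 0 < ljk)
    (t1 : ljk < lij + lik) (t2 : lij < lik + ljk) (t3 : lik < lij + ljk) :
    Real.arccos ((lij^2+lik^2-ljk^2)/(2*lij*lik)) < π - Lam Ijk := by
  obtain ⟨hgt, hlt⟩ := cos_bound hlij hlik hljk t1 (by linarith) (by linarith)
  rw [Lam]
  split_ifs with h1 h2
  · linarith
  · have hrjl : rj ≤ lij := by nlinarith [mul_nonneg (mul_nonneg hri.le hrj.le) hIij, sq_nonneg (lij - rj), sq_nonneg (lij + rj), mul_pos hri hri]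
    have hrkl : rk ≤ lik := by nlinarith [mul_nonneg (mul_nonneg hri.le hrk.le) hIik, sq_nonneg (lik - rk), sq_nonneg (lik + rk), mul_pos hri hri]
    have key : -Ijk < (lij^2+lik^2-ljk^2)/(2*lij*lik) := by
      rw [lt_div_iff₀ (by positivity)]
      nlinarith [mul_nonneg hIjk (sub_nonneg.2 (mul_le_mul hrjl hrkl hrk.le hlij.le)),
        mul_nonneg (mul_nonneg hri.le hrj.le) hIij,
        mul_nonneg (mul_nonneg hri.le hrk.le) hIik, sq_nonneg ri]
    have h := arccos_lt_of_lt (by linarith : (-1:ℝ) ≤ -Ijk) key hlt.le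
    rw [Real.arccos_neg] at h; linarith
  · have := arccos_lt_pi' hgt
    linarith

lemma card_three_ne {i j k : Fin N} (h : ({i,j,k} : Finset (Fin N)).card = 3) :
    i ≠ j ∧ i ≠ k ∧ j ≠ k := by
  refine ⟨?_, ?_, ?_⟩ <;> rintro rfl
  · have hs : ({i,i,k} : Finset (Fin N)) ⊆ {i,k} := by
      intro x hx; simp at hx ⊢; tauto
    have h1 := Finset.card_le_card hs
    have h2 : ({i,k} : Finset (Fin N)).card ≤ 2 :=
      (Finset.card_insert_le _ _).trans (by simp)
    omega
  · have hs : ({i,j,i} : Finset (Fin N)) ⊆ {i,j} := by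
      intro x hx; simp at hx ⊢; tauto
    have h1 := Finset.card_le_card hs
    have h2 : ({i,j} : Finset (Fin N)).card ≤ 2 :=
      (Finset.card_insert_le _ _).trans (by simp)
    omega
  · have hs : ({i,j,j} : Finset (Fin N)) ⊆ {i,j} := by
      intro x hx; simp at hx ⊢; tauto
    have h1 := Finset.card_le_card hs
    have h2 : ({i,j} : Finset (Fin N)).card ≤ 2 :=
      (Finset.card_insert_le _ _).trans (by simp)
    omega

lemma card_triple {a b c : Fin N} (hab : a ≠ b) (hac : a ≠ c) (hbc : b ≠ c) :
    ({a,b,c} : Finset (Fin N)).card = 3 := by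
  rw [Finset.card_insert_of_notMem (by simp [hab, hac]), Finset.card_pair hbc]

lemma mem_triple_iff {a b c i j k : Fin N} (hab : a ≠ b) (hac : a ≠ c) (hbc : b ≠ c) :
    ({i,j,k} : Finset (Fin N)) = {a,b,c} ↔
      (i,j,k) ∈ ({(a,b,c),(a,c,b),(b,a,c),(b,c,a),(c,a,b),(c,b,a)} :
        Finset (Fin N × Fin N × Fin N)) := by
  constructor
  · intro h
    have hcard : ({i,j,k} : Finset (Fin N)).card = 3 := by
      rw [h]; exact card_triple hab hac hbc
    obtain ⟨hij, hik, hjk⟩ := card_three_ne hcard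
    have hi : i ∈ ({a,b,c} : Finset (Fin N)) := by rw [← h]; simp
    have hj : j ∈ ({a,b,c} : Finset (Fin N)) := by rw [← h]; simp
    have hk : k ∈ ({a,b,c} : Finset (Fin N)) := by rw [← h]; simp
    simp only [Finset.mem_insert, Finset.mem_singleton] at hi hj hk ⊢
    rcases hi with rfl|rfl|rfl <;> rcases hj with rfl|rfl|rfl <;>
      rcases hk with rfl|rfl|rfl <;> simp_all [Prod.ext_iff]
  · intro h
    simp only [Finset.mem_insert, Finset.mem_singleton, Prod.mk.injEq] at h
    rcases h with ⟨rfl,rfl,rfl⟩|⟨rfl,rfl,rfl⟩|⟨rfl,rfl,rfl⟩|⟨rfl,rfl,rfl⟩|⟨rfl,rfl,rfl⟩|⟨rfl,rfl,rfl⟩ <;>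
      (ext x; simp; try tauto)

lemma sum_triple {a b c : Fin N} (hab : a ≠ b) (hac : a ≠ c) (hbc : b ≠ c)
    (g : Fin N → Fin N → Fin N → ℝ) :
    (∑ i, ∑ j, ∑ k, if ({i,j,k} : Finset (Fin N)) = {a,b,c} then g i j k else 0)
      = g a b c + g a c b + g b a c + g b c a + g c a b + g c b a := by
  have key : (∑ i, ∑ j, ∑ k, if ({i,j,k} : Finset (Fin N)) = {a,b,c} then g i j k else 0)
      = ∑ p ∈ ({(a,b,c),(a,c,b),(b,a,c),(b,c,a),(c,a,b),(c,b,a)} :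
          Finset (Fin N × Fin N × Fin N)),
          (if ({p.1, p.2.1, p.2.2} : Finset (Fin N)) = {a,b,c} then g p.1 p.2.1 p.2.2 else 0) := by
    have h1 : (∑ i, ∑ j, ∑ k, if ({i,j,k} : Finset (Fin N)) = {a,b,c} then g i j k else 0)
        = ∑ p ∈ (Finset.univ ×ˢ (Finset.univ ×ˢ Finset.univ) :
            Finset (Fin N × Fin N × Fin N)),
            (if ({p.1, p.2.1, p.2.2} : Finset (Fin N)) = {a,b,c} then g p.1 p.2.1 p.2.2 else 0) := by
      rw [Finset.sum_product]
      exact Finset.sum_congr rfl fun i _ => by rw [Finset.sum_product]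
    rw [h1]
    rw [show ((Finset.univ ×ˢ (Finset.univ ×ˢ Finset.univ)) :
        Finset (Fin N × Fin N × Fin N)) = Finset.univ from by simp]
    apply (Finset.sum_subset (Finset.subset_univ _) ?_).symm
    intro p _ hp
    rw [if_neg]
    intro hc
    exact hp (by rw [mem_triple_iff hab hac hbc] at hc; exact hc)
  rw [key]
  have n1 : ((a,b,c) : Fin N × Fin N × Fin N) ∉
      ({(a,c,b),(b,a,c),(b,c,a),(c,a,b),(c,b,a)} : Finset (Fin N × Fin N × Fin N)) := by
    simp [Prod.ext_iff]; tauto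
  have n2 : ((a,c,b) : Fin N × Fin N × Fin N) ∉
      ({(b,a,c),(b,c,a),(c,a,b),(c,b,a)} : Finset (Fin N × Fin N × Fin N)) := by
    simp [Prod.ext_iff]; tauto
  have n3 : ((b,a,c) : Fin N × Fin N × Fin N) ∉
      ({(b,c,a),(c,a,b),(c,b,a)} : Finset (Fin N × Fin N × Fin N)) := by
    simp [Prod.ext_iff]; tauto
  have n4 : ((b,c,a) : Fin N × Fin N × Fin N) ∉
      ({(c,a,b),(c,b,a)} : Finset (Fin N × Fin N × Fin N)) := by
    simp [Prod.ext_iff]; tauto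
  have n5 : ((c,a,b) : Fin N × Fin N × Fin N) ∉
      ({(c,b,a)} : Finset (Fin N × Fin N × Fin N)) := by
    simp [Prod.ext_iff]; tauto
  rw [Finset.sum_insert n1, Finset.sum_insert n2, Finset.sum_insert n3,
    Finset.sum_insert n4, Finset.sum_insert n5, Finset.sum_singleton]
  have e1 : ({a,b,c} : Finset (Fin N)) = {a,b,c} := rfl
  have e2 : ({a,c,b} : Finset (Fin N)) = {a,b,c} := by ext x; simp; tauto
  have e3 : ({b,a,c} : Finset (Fin N)) = {a,b,c} := by ext x; simp; tauto
  have e4 : ({b,c,a} : Finset (Fin N)) = {a,b,c} := by ext x; simp; tauto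
  have e5 : ({c,a,b} : Finset (Fin N)) = {a,b,c} := by ext x; simp; tauto
  have e6 : ({c,b,a} : Finset (Fin N)) = {a,b,c} := by ext x; simp; tauto
  simp only [e1, e2, e3, e4, e5, e6, if_pos]
  ring


lemma mem_edges_iff {Fc : Finset (Finset (Fin N))} {e : Finset (Fin N)} :
    e ∈ edges Fc ↔ ∃ f ∈ Fc, e ⊆ f ∧ e.card = 2 := by
  simp [edges, Finset.mem_biUnion, Finset.mem_powersetCard]

lemma subpair_mem_edges {Fc : Finset (Finset (Fin N))} {f : Finset (Fin N)} (hf : f ∈ Fc)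
    {i j : Fin N} (hij : i ≠ j) (hi : i ∈ f) (hj : j ∈ f) :
    ({i,j} : Finset (Fin N)) ∈ edges Fc := by
  rw [mem_edges_iff]
  refine ⟨f, hf, ?_, Finset.card_pair hij⟩
  intro x hx; simp at hx; rcases hx with rfl|rfl; exacts [hi, hj]

lemma face_distinct {Fc : Finset (Finset (Fin N))} (hT : IsTriangulation Fc) {i j k : Fin N}
    (hf : ({i,j,k} : Finset (Fin N)) ∈ Fc) : i ≠ j ∧ i ≠ k ∧ j ≠ k :=
  card_three_ne (hT.card3 _ hf)

lemma len_arg_nonneg {I : Finset (Fin N) → ℝ} {r : Fin N → ℝ} {i j : Fin N}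
    (h : 0 ≤ I {i,j}) (hri : 0 < r i) (hrj : 0 < r j) :
    0 ≤ r i ^ 2 + r j ^ 2 + 2 * r i * r j * I {i,j} := by
  nlinarith [mul_pos hri hrj]

lemma len_pos {I : Finset (Fin N) → ℝ} {r : Fin N → ℝ} {i j : Fin N}
    (h : 0 ≤ I {i,j}) (hri : 0 < r i) (hrj : 0 < r j) : 0 < len I r i j := by
  rw [len]
  apply Real.sqrt_pos.2
  nlinarith [mul_pos hri hrj]

lemma len_sq {I : Finset (Fin N) → ℝ} {r : Fin N → ℝ} {i j : Fin N}
    (h : 0 ≤ I {i,j}) (hri : 0 < r i) (hrj : 0 < r j) :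
    (len I r i j) ^ 2 = r i ^ 2 + r j ^ 2 + 2 * r i * r j * I {i,j} :=
  Real.sq_sqrt (len_arg_nonneg h hri hrj)

lemma len_comm (I : Finset (Fin N) → ℝ) (r : Fin N → ℝ) (i j : Fin N) :
    len I r i j = len I r j i := by
  rw [len, len, Finset.pair_comm j i]
  congr 1; ring

/-- The inner angle as a function. -/
noncomputable def ang (I : Finset (Fin N) → ℝ) (r : Fin N → ℝ) (i j k : Fin N) : ℝ :=
  Real.arccos (cosAng I r i j k)

lemma cosAng_swap (I : Finset (Fin N) → ℝ) (r : Fin N → ℝ) (i j k : Fin N) :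
    cosAng I r i j k = cosAng I r i k j := by
  rw [cosAng, cosAng, len_comm I r k j]
  ring

lemma ang_swap (I : Finset (Fin N) → ℝ) (r : Fin N → ℝ) (i j k : Fin N) :
    ang I r i j k = ang I r i k j := by rw [ang, ang, cosAng_swap]

lemma face_perm12 {Fc : Finset (Finset (Fin N))} {i j k : Fin N}
    (hf : ({i,j,k} : Finset (Fin N)) ∈ Fc) : ({j,i,k} : Finset (Fin N)) ∈ Fc := by
  rwa [show ({j,i,k} : Finset (Fin N)) = {i,j,k} from by ext x; simp; tauto]

lemma face_perm_rot {Fc : Finset (Finset (Fin N))} {i j k : Fin N}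
    (hf : ({i,j,k} : Finset (Fin N)) ∈ Fc) : ({j,k,i} : Finset (Fin N)) ∈ Fc := by
  rwa [show ({j,k,i} : Finset (Fin N)) = {i,j,k} from by ext x; simp; tauto]

lemma face_setup {Fc : Finset (Finset (Fin N))} {I : Finset (Fin N) → ℝ} {r : Fin N → ℝ}
    (hT : IsTriangulation Fc) (hI : ∀ e ∈ edges Fc, 0 ≤ I e) (hr : r ∈ Omega Fc I)
    {i j k : Fin N} (hf : ({i,j,k} : Finset (Fin N)) ∈ Fc) :
    (0 ≤ I {i,j} ∧ 0 ≤ I {i,k} ∧ 0 ≤ I {j,k}) ∧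
    (0 < len I r i j ∧ 0 < len I r i k ∧ 0 < len I r j k) ∧
    (len I r j k < len I r i j + len I r i k ∧
      len I r i j < len I r i k + len I r j k ∧
      len I r i k < len I r i j + len I r j k) := by
  obtain ⟨hij, hik, hjk⟩ := face_distinct hT hf
  have hi : i ∈ ({i,j,k} : Finset (Fin N)) := by simp
  have hj : j ∈ ({i,j,k} : Finset (Fin N)) := by simp
  have hk : k ∈ ({i,j,k} : Finset (Fin N)) := by simp
  have hIij := hI _ (subpair_mem_edges hf hij hi hj)
  have hIik := hI _ (subpair_mem_edges hf hik hi hk)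
  have hIjk := hI _ (subpair_mem_edges hf hjk hj hk)
  have hri := hr.1 i; have hrj := hr.1 j; have hrk := hr.1 k
  have t1 := hr.2 i j k hf
  have t2 := hr.2 k i j (face_perm_rot (face_perm_rot hf))
  have t3 := hr.2 j i k (face_perm12 hf)
  rw [len_comm I r k i, len_comm I r k j] at t2
  rw [len_comm I r j i] at t3
  exact ⟨⟨hIij, hIik, hIjk⟩,
    ⟨len_pos hIij hri hrj, len_pos hIik hri hrk, len_pos hIjk hrj hrk⟩,
    ⟨t1, t2, t3⟩⟩

lemma face_ang_sum {Fc : Finset (Finset (Fin N))} {I : Finset (Fin N) → ℝ} {r : Fin N → ℝ}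
    (hT : IsTriangulation Fc) (hI : ∀ e ∈ edges Fc, 0 ≤ I e) (hr : r ∈ Omega Fc I)
    {i j k : Fin N} (hf : ({i,j,k} : Finset (Fin N)) ∈ Fc) :
    ang I r i j k + ang I r j i k + ang I r k i j = π := by
  obtain ⟨⟨hIij, hIik, hIjk⟩, ⟨p1, p2, p3⟩, ⟨t1, t2, t3⟩⟩ := face_setup hT hI hr hf
  have h := ang_sum p3 p1 p2 t1 (by linarith) (by linarith)
  have e1 : (len I r i j ^2 + len I r i k ^2 - len I r j k ^2)/(2 * len I r i j * len I r i k)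
      = cosAng I r i j k := by rw [cosAng]
  have e2 : (len I r j k ^2 + len I r i k ^2 - len I r i j ^2)/(2 * len I r j k * len I r i k)
      = cosAng I r k i j := by
    rw [cosAng, len_comm I r k i, len_comm I r k j]; ring
  have e3 : (len I r j k ^2 + len I r i j ^2 - len I r i k ^2)/(2 * len I r j k * len I r i j)
      = cosAng I r j i k := by
    rw [cosAng, len_comm I r j i]; ring
  rw [e1, e2, e3] at h
  rw [ang, ang, ang]
  linarith

lemma face_ang_pos {Fc : Finset (Finset (Fin N))} {I : Finset (Fin N) → ℝ} {r : Fin N → ℝ}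
    (hT : IsTriangulation Fc) (hI : ∀ e ∈ edges Fc, 0 ≤ I e) (hr : r ∈ Omega Fc I)
    {i j k : Fin N} (hf : ({i,j,k} : Finset (Fin N)) ∈ Fc) :
    0 < ang I r i j k := by
  obtain ⟨⟨hIij, hIik, hIjk⟩, ⟨p1, p2, p3⟩, ⟨t1, t2, t3⟩⟩ := face_setup hT hI hr hf
  exact Real.arccos_pos.2 (cos_bound p1 p2 p3 t1 (by linarith) (by linarith)).2

lemma face_apex {Fc : Finset (Finset (Fin N))} {I : Finset (Fin N) → ℝ} {r : Fin N → ℝ}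
    (hT : IsTriangulation Fc) (hI : ∀ e ∈ edges Fc, 0 ≤ I e) (hr : r ∈ Omega Fc I)
    {i j k : Fin N} (hf : ({i,j,k} : Finset (Fin N)) ∈ Fc) :
    ang I r i j k < π - Lam (I {j,k}) := by
  obtain ⟨⟨hIij, hIik, hIjk⟩, ⟨p1, p2, p3⟩, ⟨t1, t2, t3⟩⟩ := face_setup hT hI hr hf
  have hri := hr.1 i; have hrj := hr.1 j; have hrk := hr.1 k
  exact apex_lt hri hrj hrk hIij hIik hIjk (len_sq hIij hri hrj) (len_sq hIik hri hrk)
    (len_sq hIjk hrj hrk) p1 p2 p3 t1 t2 t3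

lemma sum_face_decomp (Fc : Finset (Finset (Fin N))) (g : Fin N → Fin N → Fin N → ℝ) :
    (∑ i, ∑ j, ∑ k, if ({i,j,k} : Finset (Fin N)) ∈ Fc then g i j k else 0)
      = ∑ f ∈ Fc, ∑ i, ∑ j, ∑ k, if ({i,j,k} : Finset (Fin N)) = f then g i j k else 0 := by
  calc (∑ i, ∑ j, ∑ k, if ({i,j,k} : Finset (Fin N)) ∈ Fc then g i j k else 0)
      = ∑ i, ∑ j, ∑ f ∈ Fc, ∑ k, (if ({i,j,k} : Finset (Fin N)) = f then g i j k else 0) := by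
        refine Finset.sum_congr rfl fun i _ => Finset.sum_congr rfl fun j _ => ?_
        rw [Finset.sum_comm]
        exact Finset.sum_congr rfl fun k _ => (Finset.sum_ite_eq Fc ({i,j,k} : Finset (Fin N)) (fun _ => g i j k)).symm
    _ = ∑ i, ∑ f ∈ Fc, ∑ j, ∑ k, (if ({i,j,k} : Finset (Fin N)) = f then g i j k else 0) :=
        Finset.sum_congr rfl fun i _ => Finset.sum_comm
    _ = ∑ f ∈ Fc, ∑ i, ∑ j, ∑ k, (if ({i,j,k} : Finset (Fin N)) = f then g i j k else 0) :=
        Finset.sum_comm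

lemma edge_card_two {Fc : Finset (Finset (Fin N))} {e : Finset (Fin N)}
    (he : e ∈ edges Fc) : e.card = 2 := by
  rw [mem_edges_iff] at he; obtain ⟨f, _, _, h⟩ := he; exact h

lemma count_edges {Fc : Finset (Finset (Fin N))} (hT : IsTriangulation Fc)
    (A : Finset (Fin N)) :
    2 * ((edges Fc).filter (fun e => e ⊆ A)).card
      = ∑ f ∈ Fc, ((f ∩ A).card.choose 2) := by
  calc 2 * ((edges Fc).filter (fun e => e ⊆ A)).card
      = ∑ e ∈ (edges Fc).filter (fun e => e ⊆ A), (Fc.filter fun f => e ⊆ f).card := by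
        rw [Finset.sum_congr rfl (fun e he => hT.edge2 e (Finset.mem_filter.1 he).1),
          Finset.sum_const, smul_eq_mul, mul_comm]
    _ = ∑ e ∈ (edges Fc).filter (fun e => e ⊆ A), ∑ f ∈ Fc, if e ⊆ f then 1 else 0 :=
        Finset.sum_congr rfl fun e _ => Finset.card_filter _ _
    _ = ∑ f ∈ Fc, ∑ e ∈ (edges Fc).filter (fun e => e ⊆ A), if e ⊆ f then 1 else 0 :=
        Finset.sum_comm
    _ = ∑ f ∈ Fc, (((edges Fc).filter (fun e => e ⊆ A)).filter (fun e => e ⊆ f)).card :=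
        Finset.sum_congr rfl fun f _ => (Finset.card_filter _ _).symm
    _ = ∑ f ∈ Fc, ((f ∩ A).card.choose 2) := by
        refine Finset.sum_congr rfl fun f hf => ?_
        rw [show ((edges Fc).filter (fun e => e ⊆ A)).filter (fun e => e ⊆ f)
            = (f ∩ A).powersetCard 2 from ?_, Finset.card_powersetCard]
        ext e
        simp only [Finset.mem_filter, Finset.mem_powersetCard, mem_edges_iff,
          Finset.subset_inter_iff]
        constructor
        · rintro ⟨⟨⟨f', hf', hef', hc⟩, heA⟩, hef⟩
          exact ⟨⟨hef, heA⟩, hc⟩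
        · rintro ⟨⟨hef, heA⟩, hc⟩
          exact ⟨⟨⟨f, hf, hef, hc⟩, heA⟩, hef⟩

lemma inter_card_le_three {Fc : Finset (Finset (Fin N))} (hT : IsTriangulation Fc)
    {f : Finset (Fin N)} (hf : f ∈ Fc) (A : Finset (Fin N)) : (f ∩ A).card ≤ 3 := by
  have h := Finset.card_le_card (Finset.inter_subset_left : f ∩ A ⊆ f)
  rw [hT.card3 f hf] at h
  exact h

lemma count_edges' {Fc : Finset (Finset (Fin N))} (hT : IsTriangulation Fc)
    (A : Finset (Fin N)) :
    2 * ((edges Fc).filter (fun e => e ⊆ A)).card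
      = (Fc.filter fun f => (f ∩ A).card = 2).card
        + 3 * (Fc.filter fun f => (f ∩ A).card = 3).card := by
  rw [count_edges hT A]
  have h1 : ∀ f ∈ Fc, (f ∩ A).card.choose 2
      = (if (f ∩ A).card = 2 then 1 else 0) + 3 * (if (f ∩ A).card = 3 then 1 else 0) := by
    intro f hf
    have h3 := inter_card_le_three hT hf A
    interval_cases h : (f ∩ A).card <;> simp
  rw [Finset.sum_congr rfl h1, Finset.sum_add_distrib, ← Finset.mul_sum,
    ← Finset.card_filter, ← Finset.card_filter]

lemma three_faces {Fc : Finset (Finset (Fin N))} (hT : IsTriangulation Fc) :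
    2 * (edges Fc).card = 3 * Fc.card := by
  have h := count_edges hT Finset.univ
  rw [Finset.filter_true_of_mem (fun e _ => Finset.subset_univ e)] at h
  have h2 : ∑ f ∈ Fc, ((f ∩ Finset.univ).card.choose 2) = ∑ f ∈ Fc, 3 :=
    Finset.sum_congr rfl fun f hf => by rw [Finset.inter_univ, hT.card3 f hf]; rfl
  rw [h, h2, Finset.sum_const, smul_eq_mul, mul_comm]

lemma lk_sum {Fc : Finset (Finset (Fin N))} (hT : IsTriangulation Fc)
    (I : Finset (Fin N) → ℝ) (A : Finset (Fin N)) :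
    ∑ p ∈ Lk Fc A, (π - Lam (I p.1))
      = ∑ f ∈ Fc.filter (fun f => (f ∩ A).card = 1), (π - Lam (I (f \ A))) := by
  have hmem : ∀ p : Finset (Fin N) × Fin N, p ∈ Lk Fc A ↔
      p.1 ∈ edges Fc ∧ (∀ x ∈ p.1, x ∉ A) ∧ p.2 ∈ A ∧ insert p.2 p.1 ∈ Fc := by
    intro p
    simp [Lk, Finset.mem_filter, Finset.mem_product, and_assoc]
  refine Finset.sum_bij (fun p _ => insert p.2 p.1) ?_ ?_ ?_ ?_
  · intro p hp
    rw [hmem] at hp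
    obtain ⟨he, hout, hvA, hfc⟩ := hp
    rw [Finset.mem_filter]
    refine ⟨hfc, ?_⟩
    rw [show insert p.2 p.1 ∩ A = {p.2} from ?_, Finset.card_singleton]
    ext x
    simp only [Finset.mem_inter, Finset.mem_insert, Finset.mem_singleton]
    constructor
    · rintro ⟨rfl | hx, hxA⟩
      · rfl
      · exact absurd hxA (hout x hx)
    · rintro rfl; exact ⟨Or.inl rfl, hvA⟩
  · intro p hp q hq heq
    rw [hmem] at hp hq
    obtain ⟨hep, houtp, hvp, _⟩ := hp
    obtain ⟨heq', houtq, hvq, _⟩ := hq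
    have hv : q.2 = p.2 := by
      have : q.2 ∈ insert p.2 p.1 := by rw [heq]; exact Finset.mem_insert_self _ _
      rcases Finset.mem_insert.1 this with h | h
      · exact h
      · exact absurd hvq (houtp _ h)
    have he : p.1 = q.1 := by
      ext x
      constructor
      · intro hx
        have : x ∈ insert q.2 q.1 := by rw [← heq]; exact Finset.mem_insert_of_mem hx
        rcases Finset.mem_insert.1 this with h | h
        · exact absurd (h ▸ hvq) (houtp x hx)
        · exact h
      · intro hx
        have : x ∈ insert p.2 p.1 := by rw [heq]; exact Finset.mem_insert_of_mem hx
        rcases Finset.mem_insert.1 this with h | h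
        · exact absurd (h ▸ hvp) (houtq x hx)
        · exact h
    exact Prod.ext he hv.symm
  · intro f hf
    rw [Finset.mem_filter] at hf
    obtain ⟨hfc, hcard⟩ := hf
    obtain ⟨v, hv⟩ := Finset.card_eq_one.1 hcard
    have hvA : v ∈ A := (Finset.mem_inter.1 (hv ▸ Finset.mem_singleton_self v)).2
    have hvf : v ∈ f := (Finset.mem_inter.1 (hv ▸ Finset.mem_singleton_self v)).1
    have hcard2 : (f \ A).card = 2 := by
      have h1 : f \ (f ∩ A) = f \ A := Finset.sdiff_inter_self_left f A
      have h2 : (f \ (f ∩ A)).card = f.card - (f ∩ A).card :=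
        Finset.card_sdiff_of_subset Finset.inter_subset_left
      rw [h1] at h2
      rw [h2, hcard, hT.card3 f hfc]
    have hins : insert v (f \ A) = f := by
      ext x
      simp only [Finset.mem_insert, Finset.mem_sdiff]
      constructor
      · rintro (rfl | ⟨hx, _⟩)
        · exact hvf
        · exact hx
      · intro hx
        by_cases hxA : x ∈ A
        · left
          have : x ∈ f ∩ A := Finset.mem_inter.2 ⟨hx, hxA⟩
          rw [hv] at this
          exact Finset.mem_singleton.1 this
        · right; exact ⟨hx, hxA⟩
    refine ⟨(f \ A, v), ?_, hins⟩
    rw [hmem]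
    refine ⟨?_, fun x hx => (Finset.mem_sdiff.1 hx).2, hvA, by rw [hins]; exact hfc⟩
    rw [mem_edges_iff]
    exact ⟨f, hfc, Finset.sdiff_subset, hcard2⟩
  · intro p hp
    rw [hmem] at hp
    obtain ⟨he, hout, hvA, hfc⟩ := hp
    have : insert p.2 p.1 \ A = p.1 := by
      ext x
      simp only [Finset.mem_sdiff, Finset.mem_insert]
      constructor
      · rintro ⟨rfl | hx, hxA⟩
        · exact absurd hvA hxA
        · exact hx
      · intro hx; exact ⟨Or.inr hx, hout x hx⟩
    rw [this]

lemma exists_cross_edge {Fc : Finset (Finset (Fin N))} (hT : IsTriangulation Fc)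
    {A : Finset (Fin N)} (hA : A.Nonempty) (hA' : A ≠ Finset.univ) :
    ∃ x y : Fin N, x ∈ A ∧ y ∉ A ∧ ({x,y} : Finset (Fin N)) ∈ edges Fc := by
  obtain ⟨a, ha⟩ := hA
  have hb : ∃ b, b ∉ A := by
    by_contra h
    push_neg at h
    exact hA' (Finset.eq_univ_iff_forall.2 h)
  obtain ⟨b, hb⟩ := hb
  set G := SimpleGraph.fromRel fun i j => ({i, j} : Finset (Fin N)) ∈ edges Fc with hG
  have H : ∀ (u v : Fin N), G.Walk u v → u ∈ A → v ∉ A →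
      ∃ x y, x ∈ A ∧ y ∉ A ∧ G.Adj x y := by
    intro u v w
    induction w with
    | nil => intro h1 h2; exact absurd h1 h2
    | @cons u' v' w' hadj p ih =>
      intro h1 h2
      by_cases hc : v' ∈ A
      · exact ih hc h2
      · exact ⟨u', v', h1, hc, hadj⟩
  obtain ⟨w⟩ := hT.conn.preconnected a b
  obtain ⟨x, y, hx, hy, hadj⟩ := H a b w ha hb
  rw [hG, SimpleGraph.fromRel_adj] at hadj
  obtain ⟨hne, h | h⟩ := hadj
  · exact ⟨x, y, hx, hy, h⟩
  · exact ⟨x, y, hx, hy, by rwa [Finset.pair_comm]⟩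

lemma exists_face_of_edge {Fc : Finset (Finset (Fin N))} (hT : IsTriangulation Fc)
    {e : Finset (Fin N)} (he : e ∈ edges Fc) : ∃ f ∈ Fc, e ⊆ f := by
  have h2 := hT.edge2 e he
  have hpos : 0 < (Fc.filter fun f => e ⊆ f).card := by omega
  obtain ⟨f, hf⟩ := Finset.card_pos.1 hpos
  rw [Finset.mem_filter] at hf
  exact ⟨f, hf.1, hf.2⟩

/-- Indicator-weighted angle. -/
noncomputable def gA (A : Finset (Fin N)) (I : Finset (Fin N) → ℝ) (r : Fin N → ℝ)
    (i j k : Fin N) : ℝ :=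
  if i ∈ A then ang I r i j k else 0

lemma face_eval3 {Fc : Finset (Finset (Fin N))} {I : Finset (Fin N) → ℝ} {r : Fin N → ℝ}
    (hT : IsTriangulation Fc) (hI : ∀ e ∈ edges Fc, 0 ≤ I e) (hr : r ∈ Omega Fc I)
    {A : Finset (Fin N)} {a b c : Fin N} (hf : ({a,b,c} : Finset (Fin N)) ∈ Fc)
    (ha : a ∈ A) (hb : b ∈ A) (hc : c ∈ A) :
    gA A I r a b c + gA A I r a c b + gA A I r b a c + gA A I r b c a
      + gA A I r c a b + gA A I r c b a = 2 * π := by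
  have h := face_ang_sum hT hI hr hf
  simp only [gA, if_pos ha, if_pos hb, if_pos hc]
  rw [ang_swap I r a c b, ang_swap I r b c a, ang_swap I r c b a]
  linarith

lemma face_eval2 {Fc : Finset (Finset (Fin N))} {I : Finset (Fin N) → ℝ} {r : Fin N → ℝ}
    (hT : IsTriangulation Fc) (hI : ∀ e ∈ edges Fc, 0 ≤ I e) (hr : r ∈ Omega Fc I)
    {A : Finset (Fin N)} {a b c : Fin N} (hf : ({a,b,c} : Finset (Fin N)) ∈ Fc)
    (ha : a ∈ A) (hb : b ∈ A) (hc : c ∉ A) :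
    gA A I r a b c + gA A I r a c b + gA A I r b a c + gA A I r b c a
      + gA A I r c a b + gA A I r c b a < 2 * π := by
  have h := face_ang_sum hT hI hr hf
  have hpos : 0 < ang I r c a b :=
    face_ang_pos hT hI hr (face_perm_rot (face_perm_rot hf))
  simp only [gA, if_pos ha, if_pos hb, if_neg hc]
  rw [ang_swap I r a c b, ang_swap I r b c a]
  linarith

lemma face_eval1 {Fc : Finset (Finset (Fin N))} {I : Finset (Fin N) → ℝ} {r : Fin N → ℝ}
    (hT : IsTriangulation Fc) (hI : ∀ e ∈ edges Fc, 0 ≤ I e) (hr : r ∈ Omega Fc I)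
    {A : Finset (Fin N)} {a b c : Fin N} (hf : ({a,b,c} : Finset (Fin N)) ∈ Fc)
    (ha : a ∈ A) (hb : b ∉ A) (hc : c ∉ A) :
    gA A I r a b c + gA A I r a c b + gA A I r b a c + gA A I r b c a
      + gA A I r c a b + gA A I r c b a < 2 * (π - Lam (I {b,c})) := by
  have h := face_apex hT hI hr hf
  simp only [gA, if_pos ha, if_neg hb, if_neg hc]
  rw [ang_swap I r a c b]
  linarith

lemma face_eval0 {I : Finset (Fin N) → ℝ} {r : Fin N → ℝ}
    {A : Finset (Fin N)} {a b c : Fin N}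
    (ha : a ∉ A) (hb : b ∉ A) (hc : c ∉ A) :
    gA A I r a b c + gA A I r a c b + gA A I r b a c + gA A I r b c a
      + gA A I r c a b + gA A I r c b a = 0 := by
  simp only [gA, if_neg ha, if_neg hb, if_neg hc]
  ring

lemma sum_K {Fc : Finset (Finset (Fin N))} (I : Finset (Fin N) → ℝ) (r : Fin N → ℝ)
    (A : Finset (Fin N)) :
    ∑ i ∈ A, K Fc I r i = 2 * π * A.card - (1/2) * ∑ f ∈ Fc,
      (∑ i, ∑ j, ∑ k, if ({i,j,k} : Finset (Fin N)) = f then gA A I r i j k else 0) := by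
  rw [← sum_face_decomp]
  have h1 : ∀ i : Fin N,
      (if i ∈ A then
        (∑ j, ∑ k, if ({i,j,k} : Finset (Fin N)) ∈ Fc then Real.arccos (cosAng I r i j k) else 0)
       else 0)
      = ∑ j, ∑ k, if ({i,j,k} : Finset (Fin N)) ∈ Fc then gA A I r i j k else 0 := by
    intro i
    by_cases hi : i ∈ A
    · simp only [gA, if_pos hi, ang]
    · simp only [gA, if_neg hi]
      simp
  have h2 : ∑ i ∈ A,
      (∑ j, ∑ k, if ({i,j,k} : Finset (Fin N)) ∈ Fc then Real.arccos (cosAng I r i j k) else 0)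
      = ∑ i, ∑ j, ∑ k, if ({i,j,k} : Finset (Fin N)) ∈ Fc then gA A I r i j k else 0 := by
    rw [← Finset.sum_congr rfl (fun i (_ : i ∈ (Finset.univ : Finset (Fin N))) => h1 i)]
    rw [Finset.sum_ite_mem, Finset.univ_inter]
  rw [← h2]
  have h3 : ∑ i ∈ A, K Fc I r i = ∑ i ∈ A, (2 * π - (1/2) *
      ∑ j, ∑ k, if ({i,j,k} : Finset (Fin N)) ∈ Fc then Real.arccos (cosAng I r i j k) else 0) :=
    rfl
  rw [h3, Finset.sum_sub_distrib, Finset.sum_const, ← Finset.mul_sum, nsmul_eq_mul]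
  ring

lemma inter3_2 {A : Finset (Fin N)} {a b c : Fin N} (hab : a ≠ b)
    (ha : a ∈ A) (hb : b ∈ A) (hc : c ∉ A) :
    (({a,b,c} : Finset (Fin N)) ∩ A).card = 2 := by
  rw [show ({a,b,c} : Finset (Fin N)) ∩ A = {a,b} from by
    ext x
    simp only [Finset.mem_inter, Finset.mem_insert, Finset.mem_singleton]
    constructor
    · rintro ⟨rfl | rfl | rfl, hx⟩ <;> tauto
    · rintro (rfl | rfl) <;> tauto]
  exact Finset.card_pair hab

lemma inter3_1 {A : Finset (Fin N)} {a b c : Fin N}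
    (ha : a ∈ A) (hb : b ∉ A) (hc : c ∉ A) :
    (({a,b,c} : Finset (Fin N)) ∩ A).card = 1 := by
  rw [show ({a,b,c} : Finset (Fin N)) ∩ A = {a} from by
    ext x
    simp only [Finset.mem_inter, Finset.mem_insert, Finset.mem_singleton]
    constructor
    · rintro ⟨rfl | rfl | rfl, hx⟩ <;> tauto
    · rintro rfl; tauto]
  exact Finset.card_singleton a

lemma sdiff3_1 {A : Finset (Fin N)} {a b c : Fin N}
    (ha : a ∈ A) (hb : b ∉ A) (hc : c ∉ A) :
    ({a,b,c} : Finset (Fin N)) \ A = {b,c} := by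
  ext x
  simp only [Finset.mem_sdiff, Finset.mem_insert, Finset.mem_singleton]
  constructor
  · rintro ⟨rfl | rfl | rfl, hx⟩ <;> tauto
  · rintro (rfl | rfl) <;> tauto

lemma inter3_3 {A : Finset (Fin N)} {a b c : Fin N} (hab : a ≠ b) (hac : a ≠ c) (hbc : b ≠ c)
    (ha : a ∈ A) (hb : b ∈ A) (hc : c ∈ A) :
    (({a,b,c} : Finset (Fin N)) ∩ A).card = 3 := by
  rw [show ({a,b,c} : Finset (Fin N)) ∩ A = {a,b,c} from
    Finset.inter_eq_left.2 (by
      intro x hx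
      simp only [Finset.mem_insert, Finset.mem_singleton] at hx
      rcases hx with rfl | rfl | rfl <;> assumption)]
  exact card_triple hab hac hbc

lemma inter3_0 {A : Finset (Fin N)} {a b c : Fin N}
    (ha : a ∉ A) (hb : b ∉ A) (hc : c ∉ A) :
    (({a,b,c} : Finset (Fin N)) ∩ A).card = 0 := by
  rw [Finset.card_eq_zero]
  ext x
  simp only [Finset.mem_inter, Finset.mem_insert, Finset.mem_singleton,
    Finset.notMem_empty, iff_false, not_and]
  rintro (rfl | rfl | rfl) <;> assumption

/-- Per-face bound for the A-restricted angle sum. -/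
lemma face_bound {Fc : Finset (Finset (Fin N))} {I : Finset (Fin N) → ℝ} {r : Fin N → ℝ}
    (hT : IsTriangulation Fc) (hI : ∀ e ∈ edges Fc, 0 ≤ I e) (hr : r ∈ Omega Fc I)
    (A : Finset (Fin N)) {f : Finset (Fin N)} (hf : f ∈ Fc) :
    (∑ i, ∑ j, ∑ k, if ({i,j,k} : Finset (Fin N)) = f then gA A I r i j k else 0)
      ≤ (if (f ∩ A).card = 1 then 2*(π - Lam (I (f \ A)))
          else if (f ∩ A).card = 0 then 0 else 2*π) ∧
    ((1 ≤ (f ∩ A).card ∧ (f ∩ A).card ≤ 2) →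
      (∑ i, ∑ j, ∑ k, if ({i,j,k} : Finset (Fin N)) = f then gA A I r i j k else 0)
        < (if (f ∩ A).card = 1 then 2*(π - Lam (I (f \ A)))
            else if (f ∩ A).card = 0 then 0 else 2*π)) := by
  obtain ⟨a, b, c, hab, hac, hbc, rfl⟩ := Finset.card_eq_three.1 (hT.card3 f hf)
  rw [sum_triple hab hac hbc]
  by_cases ha : a ∈ A <;> by_cases hb : b ∈ A <;> by_cases hc : c ∈ A
  · -- 3 in A
    have hcd := inter3_3 hab hac hbc ha hb hc
    rw [hcd]
    norm_num
    exact le_of_eq (face_eval3 hT hI hr hf ha hb hc)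
  · -- a b in, c out
    have hcd := inter3_2 hab ha hb hc
    have h := face_eval2 hT hI hr hf ha hb hc
    rw [hcd]
    norm_num
    exact ⟨h.le, h⟩
  · -- a c in, b out
    have hcd : (({a,b,c} : Finset (Fin N)) ∩ A).card = 2 := by
      rw [show ({a,b,c} : Finset (Fin N)) = {c,a,b} from by ext x; simp; tauto]
      exact inter3_2 hac.symm hc ha hb
    rw [hcd]
    norm_num
    have h := face_eval2 hT hI hr (face_perm_rot (face_perm_rot hf)) hc ha hb
    constructor <;> linarith
  · -- a in, b c out
    have hcd := inter3_1 ha hb hc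
    have hsd := sdiff3_1 ha hb hc
    have h := face_eval1 hT hI hr hf ha hb hc
    rw [hcd, hsd]
    norm_num
    exact ⟨h.le, h⟩
  · -- b c in, a out
    have hcd : (({a,b,c} : Finset (Fin N)) ∩ A).card = 2 := by
      rw [show ({a,b,c} : Finset (Fin N)) = {b,c,a} from by ext x; simp; tauto]
      exact inter3_2 hbc hb hc ha
    rw [hcd]
    norm_num
    have h := face_eval2 hT hI hr (face_perm_rot hf) hb hc ha
    constructor <;> linarith
  · -- b in, a c out
    have hcd : (({a,b,c} : Finset (Fin N)) ∩ A).card = 1 := by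
      rw [show ({a,b,c} : Finset (Fin N)) = {b,a,c} from by ext x; simp; tauto]
      exact inter3_1 hb ha hc
    have hsd : ({a,b,c} : Finset (Fin N)) \ A = {a,c} := by
      rw [show ({a,b,c} : Finset (Fin N)) = {b,a,c} from by ext x; simp; tauto]
      exact sdiff3_1 hb ha hc
    rw [hcd, hsd]
    norm_num
    have h := face_eval1 hT hI hr (face_perm12 hf) hb ha hc
    constructor <;> linarith
  · -- c in, a b out
    have hcd : (({a,b,c} : Finset (Fin N)) ∩ A).card = 1 := by
      rw [show ({a,b,c} : Finset (Fin N)) = {c,a,b} from by ext x; simp; tauto]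
      exact inter3_1 hc ha hb
    have hsd : ({a,b,c} : Finset (Fin N)) \ A = {a,b} := by
      rw [show ({a,b,c} : Finset (Fin N)) = {c,a,b} from by ext x; simp; tauto]
      exact sdiff3_1 hc ha hb
    rw [hcd, hsd]
    norm_num
    have h := face_eval1 hT hI hr (face_perm_rot (face_perm_rot hf)) hc ha hb
    constructor <;> linarith
  · -- none
    have hcd := inter3_0 ha hb hc
    rw [hcd]
    norm_num
    exact le_of_eq (face_eval0 ha hb hc)

lemma gauss_bonnet {Fc : Finset (Finset (Fin N))} {I : Finset (Fin N) → ℝ} {r : Fin N → ℝ}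
    (hT : IsTriangulation Fc) (hI : ∀ e ∈ edges Fc, 0 ≤ I e) (hr : r ∈ Omega Fc I) :
    ∑ i, K Fc I r i = 2 * π * (chi Fc : ℝ) := by
  have hK := sum_K (Fc := Fc) I r (Finset.univ : Finset (Fin N))
  have hface : ∀ f ∈ Fc, (∑ i, ∑ j, ∑ k,
      if ({i,j,k} : Finset (Fin N)) = f then gA Finset.univ I r i j k else 0) = 2*π := by
    intro f hf
    obtain ⟨a, b, c, hab, hac, hbc, rfl⟩ := Finset.card_eq_three.1 (hT.card3 f hf)
    rw [sum_triple hab hac hbc]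
    exact face_eval3 hT hI hr hf (Finset.mem_univ a) (Finset.mem_univ b) (Finset.mem_univ c)
  rw [Finset.sum_congr rfl hface, Finset.sum_const, nsmul_eq_mul, Finset.card_univ,
    Fintype.card_fin] at hK
  have h3 := three_faces hT
  have h3' : (2:ℝ) * (edges Fc).card = 3 * Fc.card := by exact_mod_cast h3
  have hchi : (chi Fc : ℝ) = (N:ℝ) - ((edges Fc).card : ℝ) + (Fc.card : ℝ) := by
    rw [chi]; push_cast; ring
  rw [hK, hchi]
  linear_combination π * h3'

lemma key_ineq {Fc : Finset (Finset (Fin N))} {I : Finset (Fin N) → ℝ} {r : Fin N → ℝ}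
    (hT : IsTriangulation Fc) (hI : ∀ e ∈ edges Fc, 0 ≤ I e) (hr : r ∈ Omega Fc I)
    {A : Finset (Fin N)} (hA : A.Nonempty) (hA' : A ≠ Finset.univ) :
    Ybound Fc I A < ∑ i ∈ A, K Fc I r i := by
  classical
  have hK := sum_K (Fc := Fc) I r A
  obtain ⟨x, y, hx, hy, he⟩ := exists_cross_edge hT hA hA'
  obtain ⟨f0, hf0, hsub⟩ := exists_face_of_edge hT he
  have hx0 : x ∈ f0 := hsub (by simp)
  have hy0 : y ∈ f0 := hsub (by simp)
  have hcard0 : 1 ≤ (f0 ∩ A).card ∧ (f0 ∩ A).card ≤ 2 := by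
    constructor
    · exact Finset.card_pos.2 ⟨x, Finset.mem_inter.2 ⟨hx0, hx⟩⟩
    · have hss : f0 ∩ A ⊂ f0 :=
        ⟨Finset.inter_subset_left, fun hsub' => hy ((Finset.mem_inter.1 (hsub' hy0)).2)⟩
      have hlt := Finset.card_lt_card hss
      rw [hT.card3 f0 hf0] at hlt
      omega
  have hstrict : (∑ f ∈ Fc, ∑ i, ∑ j, ∑ k,
        if ({i,j,k} : Finset (Fin N)) = f then gA A I r i j k else 0)
      < ∑ f ∈ Fc, (if (f ∩ A).card = 1 then 2*(π - Lam (I (f \ A)))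
          else if (f ∩ A).card = 0 then 0 else 2*π) := by
    apply Finset.sum_lt_sum (fun f hf => (face_bound hT hI hr A hf).1)
    exact ⟨f0, hf0, (face_bound hT hI hr A hf0).2 hcard0⟩
  set F1 := Fc.filter (fun f => (f ∩ A).card = 1) with hF1
  set F2 := Fc.filter (fun f => (f ∩ A).card = 2) with hF2
  set F3 := Fc.filter (fun f => (f ∩ A).card = 3) with hF3
  have hBsplit : ∀ f ∈ Fc, (if (f ∩ A).card = 1 then 2*(π - Lam (I (f \ A)))
        else if (f ∩ A).card = 0 then 0 else 2*π)
      = (if (f ∩ A).card = 1 then 2*(π - Lam (I (f \ A))) else 0)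
        + ((if (f ∩ A).card = 2 then 2*π else 0) + (if (f ∩ A).card = 3 then 2*π else 0)) := by
    intro f hf
    have h3 := inter_card_le_three hT hf A
    rcases (by omega : (f ∩ A).card = 0 ∨ (f ∩ A).card = 1 ∨ (f ∩ A).card = 2
      ∨ (f ∩ A).card = 3) with h | h | h | h <;> rw [h] <;> norm_num
  have hBsum : (∑ f ∈ Fc, (if (f ∩ A).card = 1 then 2*(π - Lam (I (f \ A)))
        else if (f ∩ A).card = 0 then 0 else 2*π))
      = 2 * (∑ f ∈ F1, (π - Lam (I (f \ A)))) + (2*π*(F2.card:ℝ) + 2*π*(F3.card:ℝ)) := by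
    rw [Finset.sum_congr rfl hBsplit, Finset.sum_add_distrib, Finset.sum_add_distrib,
      ← Finset.sum_filter, ← Finset.sum_filter, ← Finset.sum_filter, ← hF1, ← hF2, ← hF3,
      Finset.sum_const, Finset.sum_const, nsmul_eq_mul, nsmul_eq_mul, Finset.mul_sum]
    ring
  have hLk : ∑ p ∈ Lk Fc A, (π - Lam (I p.1)) = ∑ f ∈ F1, (π - Lam (I (f \ A))) :=
    lk_sum hT I A
  have hFA : (Fc.filter fun f => f ⊆ A) = F3 := by
    apply Finset.filter_congr
    intro f hf
    constructor
    · intro hsubA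
      rw [Finset.inter_eq_left.2 hsubA]
      exact hT.card3 f hf
    · intro hcard
      have heq : f ∩ A = f := Finset.eq_of_subset_of_card_le Finset.inter_subset_left
        (by rw [hcard, hT.card3 f hf])
      exact Finset.inter_eq_left.1 heq
  have hE := count_edges' hT A
  have hEc : ((2 * ((edges Fc).filter (fun e => e ⊆ A)).card : ℕ) : ℝ)
      = ((F2.card + 3 * F3.card : ℕ) : ℝ) := by rw [hF2, hF3]; exact_mod_cast congrArg Nat.cast hE
  have hE' : 2*π*((((edges Fc).filter (fun e => e ⊆ A)).card : ℕ) : ℝ)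
      = π*(F2.card:ℝ) + 3*π*(F3.card:ℝ) := by
    push_cast at hEc
    linear_combination π * hEc
  have hY : Ybound Fc I A = -(∑ f ∈ F1, (π - Lam (I (f \ A))))
      + 2*π*((A.card:ℝ) - (((edges Fc).filter (fun e => e ⊆ A)).card : ℝ) + (F3.card:ℝ)) := by
    rw [Ybound, hLk]
    have hc : ((chiSub Fc A : ℤ) : ℝ) = (A.card:ℝ)
        - (((edges Fc).filter (fun e => e ⊆ A)).card : ℝ) + (F3.card:ℝ) := by
      rw [chiSub, hFA]; push_cast; ring
    rw [hc]
  rw [hK, hY]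
  linarith [hstrict, hBsum, hE']

/-- if there is a constant α-curvature metric r ∈ Ω, then:
χ(M) > 0 ⟹ Y contains a point with all coordinates positive;
χ(M) < 0 ⟹ Y contains a point with all coordinates negative;
χ(M) = 0 ⟹ 0 ∈ Y. -/
theorem stmt17 {N : ℕ} (Fc : Finset (Finset (Fin N))) (hT : IsTriangulation Fc)
    (I : Finset (Fin N) → ℝ) (hI : ∀ e ∈ edges Fc, 0 ≤ I e) (α : ℝ)
    (r : Fin N → ℝ) (hr : r ∈ Omega Fc I)
    (hconst : ∀ i : Fin N, K Fc I r i = sA Fc α r * r i ^ α) :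
    (0 < chi Fc → ∃ x : Fin N → ℝ, (∀ i, 0 < x i) ∧ memY Fc I x) ∧
    (chi Fc < 0 → ∃ x : Fin N → ℝ, (∀ i, x i < 0) ∧ memY Fc I x) ∧
    (chi Fc = 0 → memY Fc I (0 : Fin N → ℝ)) := by
  have hGB := gauss_bonnet hT hI hr
  have hKey : ∀ {A : Finset (Fin N)}, A.Nonempty → A ≠ Finset.univ →
      Ybound Fc I A < ∑ i ∈ A, K Fc I r i := fun hA hA' => key_ineq hT hI hr hA hA'
  have hNE : Nonempty (Fin N) := hT.conn.nonempty
  have hden : 0 < ∑ j, r j ^ α :=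
    Finset.sum_pos (fun j _ => Real.rpow_pos_of_pos (hr.1 j) α) Finset.univ_nonempty
  have hmemY : memY Fc I (fun i => K Fc I r i) :=
    ⟨hGB, fun A hA hA' => hKey hA hA'⟩
  refine ⟨?_, ?_, ?_⟩
  · intro hchi
    refine ⟨fun i => K Fc I r i, fun i => ?_, hmemY⟩
    show 0 < K Fc I r i
    rw [hconst i]
    have hcast : (0:ℝ) < (chi Fc : ℝ) := by exact_mod_cast hchi
    have hsA : 0 < sA Fc α r :=
      div_pos (mul_pos (mul_pos two_pos Real.pi_pos) hcast) hden
    exact mul_pos hsA (Real.rpow_pos_of_pos (hr.1 i) α)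
  · intro hchi
    refine ⟨fun i => K Fc I r i, fun i => ?_, hmemY⟩
    show K Fc I r i < 0
    rw [hconst i]
    have hcast : (chi Fc : ℝ) < 0 := by exact_mod_cast hchi
    have hsA : sA Fc α r < 0 :=
      div_neg_of_neg_of_pos (mul_neg_of_pos_of_neg (mul_pos two_pos Real.pi_pos) hcast) hden
    exact mul_neg_of_neg_of_pos hsA (Real.rpow_pos_of_pos (hr.1 i) α)
  · intro hchi
    have hx : ∀ i, K Fc I r i = 0 := by
      intro i
      rw [hconst i, sA, hchi]
      simp
    constructor
    · simp only [Pi.zero_apply, Finset.sum_const, smul_zero, hchi]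
      simp
    · intro A hA hA'
      have h := hKey hA hA'
      rw [show ∑ i ∈ A, (0 : Fin N → ℝ) i = ∑ i ∈ A, K Fc I r i from
        Finset.sum_congr rfl fun i _ => (hx i).symm]
      exact h

end IDCP
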